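/- Let $a : (0,\infty)\to(0,\infty)$ be $C^1$, monotone, with $-1 < i_a \le s_a < \infty$. Then for every $t, \tau > 0$ there exists $\vartheta > 0$ such that $[a(|\xi|)\xi - a(|\eta|)\eta]\cdot(\xi-\eta) > \vartheta$ for all $\xi, \eta \in \mathbb{R}^{Nn}$ with $|\xi - \eta| \ge t$, $|\xi| \le \tau$, and $|\eta| \le \tau$. -/

import Mathlib

/-!
Since `t a'(t) ≥ i_a a(t)` with `i_a > -1`, the map `s ↦ a(s) s` has derivative at least
`(1 + i_a) a(s) > 0`, so it is strictly increasing, and `s ↦ a(s) s^(-i_a)` is nondecreasing,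
which gives `a(s) s ≤ a(1) s^(1 + i_a) → 0` as `s → 0`; hence `A ξ = a(|ξ|) ξ` is continuous.
Writing `r = |ξ|`, `ρ = |η|`,
`(A ξ - A η)·(ξ - η) = (a(r) r - a(ρ) ρ)(r - ρ) + (a(r) + a(ρ))(r ρ - ξ·η)`,
a sum of two nonnegative terms that vanishes only for `ξ = η`. A continuous function that is
positive on the compact set `{|ξ - η| ≥ t, |ξ|, |η| ≤ τ}` is bounded below there by some `ϑ > 0`.
-/

open Real Set Filter Topology

section Scalar

variable {a : ℝ → ℝ} {ia : ℝ}

lemma StrictMonoOn.sub_mul_sub_pos {f : ℝ → ℝ} {s : Set ℝ} (hf : StrictMonoOn f s) {x y : ℝ}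
    (hx : x ∈ s) (hy : y ∈ s) (hxy : x ≠ y) : 0 < (f x - f y) * (x - y) := by
  rcases hxy.lt_or_gt with h | h
  · exact mul_pos_of_neg_of_neg (sub_neg.2 (hf hx hy h)) (sub_neg.2 h)
  · exact mul_pos (sub_pos.2 (hf hy hx h)) (sub_pos.2 h)

lemma strictMonoOn_mul_id_Ici (hpos : ∀ s > 0, 0 < a s) (hda : DifferentiableOn ℝ a (Ioi 0))
    (hia : -1 < ia) (hinf : ∀ s > 0, ia * a s ≤ s * deriv a s) :
    StrictMonoOn (fun s => a s * s) (Ici 0) := by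
  have hmono : StrictMonoOn (fun s => a s * s) (Ioi 0) := by
    refine strictMonoOn_of_deriv_pos (convex_Ioi 0) (hda.continuousOn.mul continuousOn_id)
      fun s hs => ?_
    rw [interior_Ioi] at hs
    have hd : HasDerivAt (fun s => a s * s) (deriv a s * s + a s * 1) s :=
      (hda.differentiableAt (Ioi_mem_nhds hs)).hasDerivAt.mul (hasDerivAt_id s)
    rw [hd.deriv]
    nlinarith [hpos s hs, hinf s hs]
  intro x hx y hy hxy
  rcases (mem_Ici.1 hx).eq_or_lt with rfl | hx
  · simpa using mul_pos (hpos y hxy) hxy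
  · exact hmono hx (hx.trans hxy) hxy

lemma monotoneOn_mul_rpow_neg (hda : DifferentiableOn ℝ a (Ioi 0))
    (hinf : ∀ s > 0, ia * a s ≤ s * deriv a s) :
    MonotoneOn (fun s => a s * s ^ (-ia)) (Ioi 0) := by
  refine monotoneOn_of_deriv_nonneg (convex_Ioi 0)
    (hda.continuousOn.mul (continuousOn_id.rpow_const fun s hs => Or.inl (ne_of_gt hs)))
    (fun s hs => ?_) fun s hs => ?_
  all_goals rw [interior_Ioi] at hs
  · exact ((hda.differentiableAt (Ioi_mem_nhds hs)).mul
      (differentiableAt_id.rpow_const (Or.inl (ne_of_gt hs)))).differentiableWithinAt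
  · have hd : HasDerivAt (fun s => a s * s ^ (-ia))
        (deriv a s * s ^ (-ia) + a s * (-ia * s ^ (-ia - 1))) s :=
      (hda.differentiableAt (Ioi_mem_nhds hs)).hasDerivAt.mul
        (hasDerivAt_rpow_const (Or.inl (ne_of_gt hs)))
    have hsplit : s ^ (-ia) = s * s ^ (-ia - 1) := by
      rw [rpow_sub_one hs.ne', mul_div_cancel₀ _ hs.ne']
    rw [hd.deriv, hsplit]
    nlinarith [hinf s hs, rpow_pos_of_pos hs (-ia - 1)]

lemma continuousWithinAt_mul_id_Ici_zero (hpos : ∀ s > 0, 0 < a s)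
    (hda : DifferentiableOn ℝ a (Ioi 0)) (hia : -1 < ia)
    (hinf : ∀ s > 0, ia * a s ≤ s * deriv a s) :
    ContinuousWithinAt (fun s => a s * s) (Ici 0) 0 := by
  rw [← continuousWithinAt_Ioi_iff_Ici, ContinuousWithinAt, mul_zero]
  have hbound : ∀ s ∈ Ioc (0 : ℝ) 1, a s * s ≤ a 1 * s ^ (1 + ia) := by
    rintro s ⟨hs, hs1⟩
    have h := monotoneOn_mul_rpow_neg hda hinf hs (mem_Ioi.2 one_pos) hs1
    simp only [one_rpow, mul_one] at h
    calc a s * s = a s * s ^ (-ia) * s ^ (1 + ia) := by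
          rw [mul_assoc, ← rpow_add hs]; simp
      _ ≤ a 1 * s ^ (1 + ia) := by gcongr
  have hlim : Tendsto (fun s : ℝ => a 1 * s ^ (1 + ia)) (𝓝[>] 0) (𝓝 0) := by
    have := ((continuousAt_rpow_const 0 (1 + ia) (Or.inr (by linarith))).tendsto.const_mul (a 1))
    rw [zero_rpow (by linarith), mul_zero] at this
    exact this.mono_left nhdsWithin_le_nhds
  refine tendsto_of_tendsto_of_tendsto_of_le_of_le' tendsto_const_nhds hlim ?_ ?_
  · filter_upwards [self_mem_nhdsWithin] with s hs using (mul_pos (hpos s hs) hs).le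
  · filter_upwards [Ioc_mem_nhdsGT one_pos] with s hs using hbound s hs

end Scalar

lemma continuous_smul_norm {E : Type*} [NormedAddCommGroup E] [NormedSpace ℝ E] {a : ℝ → ℝ}
    (ha : ContinuousOn a (Ioi 0)) (h0 : ContinuousWithinAt (fun s => a s * s) (Ici 0) 0) :
    Continuous fun ξ : E => a ‖ξ‖ • ξ := by
  refine continuous_iff_continuousAt.2 fun ξ => ?_
  rcases eq_or_ne ξ 0 with rfl | hξ
  · have hnorm : ContinuousAt (fun ζ : E => a ‖ζ‖ * ‖ζ‖) 0 := by
      have h0' : ContinuousWithinAt (fun s => a s * s) (Ici 0) ‖(0 : E)‖ := by simpa using h0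
      exact (continuousWithinAt_univ _ _).1 (h0'.comp continuous_norm.continuousWithinAt
        (mapsTo_univ_iff.2 fun ζ => norm_nonneg ζ))
    simp only [ContinuousAt, norm_zero, smul_zero]
    rw [tendsto_zero_iff_norm_tendsto_zero]
    simpa [norm_smul] using hnorm.tendsto.abs
  · exact ((ha.continuousAt (Ioi_mem_nhds (norm_pos_iff.2 hξ))).comp
      continuous_norm.continuousAt).smul continuousAt_id

section InnerProduct

variable {E : Type*} [NormedAddCommGroup E] [InnerProductSpace ℝ E]

lemma inner_smul_sub_smul_sub (α β : ℝ) (ξ η : E) :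
    inner ℝ (α • ξ - β • η) (ξ - η) = (α * ‖ξ‖ - β * ‖η‖) * (‖ξ‖ - ‖η‖)
      + (α + β) * (‖ξ‖ * ‖η‖ - inner ℝ ξ η) := by
  simp only [inner_sub_left, inner_sub_right, real_inner_smul_left,
    real_inner_self_eq_norm_sq, real_inner_comm η ξ]
  ring

lemma mul_norm_mul_norm_sub_inner_nonneg {a : ℝ → ℝ} (hpos : ∀ s > 0, 0 < a s) (ξ η : E) :
    0 ≤ a ‖ξ‖ * (‖ξ‖ * ‖η‖ - inner ℝ ξ η) := by
  rcases eq_or_ne ξ 0 with rfl | hξ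
  · simp
  · exact mul_nonneg (hpos _ (norm_pos_iff.2 hξ)).le (sub_nonneg.2 (real_inner_le_norm ξ η))

lemma inner_smul_norm_sub_pos {a : ℝ → ℝ} (hpos : ∀ s > 0, 0 < a s)
    (hmono : StrictMonoOn (fun s => a s * s) (Ici 0)) {ξ η : E} (hξη : ξ ≠ η) :
    0 < inner ℝ (a ‖ξ‖ • ξ - a ‖η‖ • η) (ξ - η) := by
  rw [inner_smul_sub_smul_sub, add_mul]
  have hξ := mul_norm_mul_norm_sub_inner_nonneg hpos ξ η
  have hη := mul_norm_mul_norm_sub_inner_nonneg hpos η ξ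
  rw [real_inner_comm ξ η, mul_comm ‖η‖] at hη
  rcases eq_or_ne ‖ξ‖ ‖η‖ with hr | hr
  · have hr0 : 0 < ‖ξ‖ := by
      refine (norm_nonneg ξ).lt_of_ne fun h => hξη ?_
      rw [norm_eq_zero.1 h.symm, norm_eq_zero.1 (hr.symm.trans h.symm)]
    -- on a sphere, `‖ξ‖‖η‖ - ⟪ξ, η⟫ = ‖ξ - η‖² / 2`
    have hgap : 0 < ‖ξ‖ * ‖η‖ - inner ℝ ξ η := by
      have := norm_sub_sq_real ξ η
      nlinarith [norm_pos_iff.2 (sub_ne_zero.2 hξη)]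
    rw [sub_eq_zero_of_eq hr, mul_zero, zero_add]
    linarith [mul_pos (hpos _ hr0) hgap]
  · have := hmono.sub_mul_sub_pos (mem_Ici.2 (norm_nonneg ξ)) (mem_Ici.2 (norm_nonneg η)) hr
    linarith

end InnerProduct

lemma IsCompact.exists_pos_lt {β : Type*} [TopologicalSpace β] {f : β → ℝ} {s : Set β}
    (hs : IsCompact s) (hf : ContinuousOn f s) (hpos : ∀ x ∈ s, 0 < f x) :
    ∃ θ > 0, ∀ x ∈ s, θ < f x := by
  obtain ⟨θ, hθ, hle⟩ := hs.exists_forall_le' hf hpos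
  exact ⟨θ / 2, half_pos hθ, fun x hx => (half_lt_self hθ).trans_le (hle x hx)⟩

lemma isCompact_setOf_le_norm_sub {E : Type*} [NormedAddCommGroup E] [ProperSpace E] (t τ : ℝ) :
    IsCompact {p : E × E | t ≤ ‖p.1 - p.2‖ ∧ ‖p.1‖ ≤ τ ∧ ‖p.2‖ ≤ τ} := by
  refine ((isCompact_closedBall 0 τ).prod (isCompact_closedBall 0 τ)).of_isClosed_subset ?_ ?_
  · exact (isClosed_le continuous_const (continuous_fst.sub continuous_snd).norm).inter
      ((isClosed_le continuous_fst.norm continuous_const).inter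
        (isClosed_le continuous_snd.norm continuous_const))
  · rintro ⟨ξ, η⟩ ⟨-, hξ, hη⟩
    simp_all [Metric.mem_closedBall]

lemma exists_pos_lt_inner_sub {E : Type*} [NormedAddCommGroup E] [InnerProductSpace ℝ E]
    [ProperSpace E] {f : E → E} (hf : Continuous f)
    (hmono : ∀ ξ η, ξ ≠ η → 0 < inner ℝ (f ξ - f η) (ξ - η)) {t : ℝ} (ht : 0 < t) (τ : ℝ) :
    ∃ θ > 0, ∀ ξ η : E, t ≤ ‖ξ - η‖ → ‖ξ‖ ≤ τ → ‖η‖ ≤ τ → θ < inner ℝ (f ξ - f η) (ξ - η) := by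
  have hcont : Continuous fun p : E × E => inner ℝ (f p.1 - f p.2) (p.1 - p.2) :=
    ((hf.comp continuous_fst).sub (hf.comp continuous_snd)).inner
      (continuous_fst.sub continuous_snd)
  obtain ⟨θ, hθ, hlt⟩ := (isCompact_setOf_le_norm_sub t τ).exists_pos_lt hcont.continuousOn
    fun p hp => hmono p.1 p.2 fun h => by
      have := hp.1
      rw [h, sub_self, norm_zero] at this
      linarith
  exact ⟨θ, hθ, fun ξ η h₁ h₂ h₃ => hlt (ξ, η) ⟨h₁, h₂, h₃⟩⟩

theorem stmt_9_general (N n : ℕ) (a : ℝ → ℝ) (hapos : ∀ t > 0, 0 < a t)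
    (haC1 : ContDiffOn ℝ 1 a (Set.Ioi 0))
    (ia : ℝ) (hia : -1 < ia)
    (hinf : ∀ t > 0, ia ≤ t * deriv a t / a t)
    (A : EuclideanSpace ℝ (Fin N × Fin n) → EuclideanSpace ℝ (Fin N × Fin n))
    (hA : ∀ ξ, ξ ≠ 0 → A ξ = a ‖ξ‖ • ξ) (hA0 : A 0 = 0) :
    ∀ t > (0:ℝ), ∀ τ > (0:ℝ), ∃ θ > (0:ℝ),
      ∀ ξ η : EuclideanSpace ℝ (Fin N × Fin n),
        t ≤ ‖ξ - η‖ → ‖ξ‖ ≤ τ → ‖η‖ ≤ τ →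
          θ < (inner ℝ (A ξ - A η) (ξ - η) : ℝ) := by
  intro t ht τ _
  have hA' : A = fun ξ => a ‖ξ‖ • ξ := funext fun ξ => by
    rcases eq_or_ne ξ 0 with rfl | hξ
    · simp [hA0]
    · exact hA ξ hξ
  subst hA'
  have hda : DifferentiableOn ℝ a (Ioi 0) := haC1.differentiableOn one_ne_zero
  have hinf' : ∀ s > 0, ia * a s ≤ s * deriv a s :=
    fun s hs => (le_div_iff₀ (hapos s hs)).1 (hinf s hs)
  exact exists_pos_lt_inner_sub
    (continuous_smul_norm hda.continuousOn
      (continuousWithinAt_mul_id_Ici_zero hapos hda hia hinf'))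
    (fun ξ η => inner_smul_norm_sub_pos hapos (strictMonoOn_mul_id_Ici hapos hda hia hinf'))
    ht τ

theorem stmt_9 (N n : ℕ) (a : ℝ → ℝ) (hapos : ∀ t > 0, 0 < a t)
    (haC1 : ContDiffOn ℝ 1 a (Set.Ioi 0))
    (hmono : MonotoneOn a (Set.Ioi 0) ∨ AntitoneOn a (Set.Ioi 0))
    (ia sa : ℝ) (hia : -1 < ia) (hisa : ia ≤ sa)
    (hinf : ∀ t > 0, ia ≤ t * deriv a t / a t)
    (hsup : ∀ t > 0, t * deriv a t / a t ≤ sa)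
    (A : EuclideanSpace ℝ (Fin N × Fin n) → EuclideanSpace ℝ (Fin N × Fin n))
    (hA : ∀ ξ, ξ ≠ 0 → A ξ = a ‖ξ‖ • ξ) (hA0 : A 0 = 0) :
    ∀ t > (0:ℝ), ∀ τ > (0:ℝ), ∃ θ > (0:ℝ),
      ∀ ξ η : EuclideanSpace ℝ (Fin N × Fin n),
        t ≤ ‖ξ - η‖ → ‖ξ‖ ≤ τ → ‖η‖ ≤ τ →
          θ < (inner ℝ (A ξ - A η) (ξ - η) : ℝ) :=
  stmt_9_general N n a hapos haC1 ia hia hinf A hA hA0
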